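/- For a probability measure μ on (0,1] and integrable random variable Z, define h(z) = ∫₀¹ [F_Z^{-1}(α) + (1/α)·min(z − F_Z^{-1}(α), 0)] μ(dα). Then E[h(Z)] = ∫₀¹ CVaR_α(Z) μ(dα), i.e., the function h attains the spectral risk measure value in expectation. -/

import Mathlib

/-!
Write the Rockafellar–Uryasev integrand as `z - ruGap α c z`, where
`ruGap α c z = (z - c)⁺ + (α⁻¹ - 1) (c - z)⁺ ≥ 0` for `α ∈ (0, 1]`. Both sides are then iterated
integrals of `Z ω - ruGap α (q α) (Z ω)`, in the two orders, and Tonelli for the nonnegative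
`ruGap` decides everything. If its double integral is finite, Fubini gives the equality. If it is
infinite, both Bochner integrals are the junk value `0`: on the right because `α ↦ CVaR_α(Z)` is not
integrable, on the left because `z ↦ ∫ ruGap α (q α) z dμ(α)` is finite at almost every value of `Z`
(unless it is infinite everywhere, and then `h = 0`). Indeed, finiteness at one point spreads to
every `z` with `P(Z ≤ z) > 0`, since `q α ≤ z` for `α ≤ P(Z ≤ z)`, and `P(Z ≤ Z ω) > 0` almost
surely.
-/

open MeasureTheory Set ProbabilityTheory Filter

noncomputable section

def quantile (ρ : Measure ℝ) (u : ℝ) : ℝ := sInf {z | u ≤ cdf ρ z}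

section Quantile

variable (ρ : Measure ℝ) {u z : ℝ}

lemma bddBelow_setOf_le_cdf (hu : 0 < u) : BddBelow {z | u ≤ cdf ρ z} := by
  obtain ⟨a, ha⟩ := eventually_atBot.mp ((tendsto_cdf_atBot ρ).eventually (gt_mem_nhds hu))
  exact ⟨a, fun z hz => not_lt.mp fun hza => (ha z hza.le).not_ge hz⟩

lemma nonempty_setOf_le_cdf (hu : u < 1) : {z | u ≤ cdf ρ z}.Nonempty :=
  ((tendsto_cdf_atTop ρ).eventually (lt_mem_nhds hu)).exists.imp fun _ h => h.le

lemma quantile_le (hu : 0 < u) (hz : u ≤ cdf ρ z) : quantile ρ u ≤ z :=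
  csInf_le (bddBelow_setOf_le_cdf ρ hu) hz

lemma monotoneOn_quantile : MonotoneOn (quantile ρ) (Ioo 0 1) :=
  fun _ hu _ hv huv => csInf_le_csInf (bddBelow_setOf_le_cdf ρ hu.1)
    (nonempty_setOf_le_cdf ρ hv.2) fun _ hz => huv.trans hz

end Quantile

-- `quantile ρ 1` is a junk value unless `ρ` has bounded support, so `quantile ρ` is only
-- monotone on `Ioo 0 1`.
lemma aemeasurable_restrict_Ioc_of_monotoneOn_Ioo {μ : Measure ℝ} {f : ℝ → ℝ} {a b : ℝ}
    (hab : a < b) (hf : MonotoneOn f (Ioo a b)) : AEMeasurable f (μ.restrict (Ioc a b)) := by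
  rw [← Ioo_union_right hab, Measure.restrict_union (by simp) (measurableSet_singleton b),
    aemeasurable_add_measure_iff, Measure.restrict_singleton]
  exact ⟨aemeasurable_restrict_of_monotoneOn measurableSet_Ioo hf,
    aemeasurable_dirac.smul_measure _⟩

lemma aemeasurable_quantile (ρ : Measure ℝ) {ν : Measure ℝ} (hν : ∀ᵐ α ∂ν, α ∈ Ioc 0 1) :
    AEMeasurable (quantile ρ) ν := by
  rw [← Measure.restrict_eq_self_of_ae_mem hν]
  exact aemeasurable_restrict_Ioc_of_monotoneOn_Ioo one_pos (monotoneOn_quantile ρ)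

lemma ae_measure_Iic_ne_zero (ρ : Measure ℝ) [IsFiniteMeasure ρ] : ∀ᵐ z ∂ρ, ρ (Iic z) ≠ 0 := by
  have hT : IsLowerSet {z | ρ (Iic z) = 0} := fun _ _ hzz' hz =>
    measure_mono_null (Iic_subset_Iic.2 hzz') hz
  simp only [ae_iff, ne_eq, not_not]
  -- By inner regularity: a compact subset of the null lower set lies below its maximum.
  by_contra hpos
  obtain ⟨K, hKT, hK, hKpos⟩ := hT.ordConnected.measurableSet.exists_lt_isCompact_of_ne_top
    (measure_ne_top ρ _) (pos_iff_ne_zero.2 hpos)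
  have hKne : K.Nonempty := nonempty_of_measure_ne_zero hKpos.ne'
  exact hKpos.ne' (measure_mono_null (fun _ hx => le_csSup hK.bddAbove hx)
    (hKT (hK.sSup_mem hKne)))

def ruGap (α c z : ℝ) : ℝ := z - (c + α⁻¹ * min (z - c) 0)

section RUGap

variable {α c z z₀ b : ℝ}

lemma ruGap_nonneg (hα : α ∈ Ioc 0 1) : 0 ≤ ruGap α c z := by
  have : 1 ≤ α⁻¹ := one_le_inv₀ hα.1 |>.2 hα.2
  unfold ruGap
  rcases le_total (z - c) 0 with h | h
  · rw [min_eq_left h]; nlinarith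
  · rw [min_eq_right h]; nlinarith

lemma ruGap_le_add_inv_mul_abs (hα : α ∈ Ioc 0 1) (hb : b ∈ Ioc 0 1) (hc : α ≤ b → c ≤ z) :
    ruGap α c z ≤ ruGap α c z₀ + b⁻¹ * |z - z₀| := by
  have hα' : 1 ≤ α⁻¹ := one_le_inv₀ hα.1 |>.2 hα.2
  have hb' : 1 ≤ b⁻¹ := one_le_inv₀ hb.1 |>.2 hb.2
  unfold ruGap
  rcases le_or_gt α b with hαb | hbα
  · have hcz := hc hαb
    have habs : z - z₀ ≤ b⁻¹ * |z - z₀| :=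
      (le_abs_self _).trans (le_mul_of_one_le_left (abs_nonneg _) hb')
    rw [min_eq_right (by linarith)]
    rcases le_total (z₀ - c) 0 with h | h
    · rw [min_eq_left h]; nlinarith
    · rw [min_eq_right h]; linarith
  · have : α⁻¹ ≤ b⁻¹ := (inv_le_inv₀ hα.1 hb.1).2 hbα.le
    rcases le_total (z - c) 0 with h | h <;> rcases le_total (z₀ - c) 0 with h' | h' <;>
      simp only [min_eq_left, min_eq_right, h, h'] <;>
      nlinarith [le_abs_self (z - z₀), neg_abs_le (z - z₀)]

end RUGap

lemma integral_sub_eq_zero_of_lintegral_ofReal_eq_top {X : Type*} [MeasurableSpace X]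
    {ν : Measure X} {f g : X → ℝ} (hf : Integrable f ν) (hg : 0 ≤ᵐ[ν] g)
    (h : ∫⁻ x, ENNReal.ofReal (g x) ∂ν = ⊤) : ∫ x, (f x - g x) ∂ν = 0 := by
  refine integral_undef fun hfg => ?_
  have : Integrable g ν := (hf.sub hfg).congr (ae_of_all _ fun x => sub_sub_cancel (f x) (g x))
  exact ((hasFiniteIntegral_iff_ofReal hg).1 this.2).ne h

lemma ae_cdf_map_pos {Ω : Type*} [MeasurableSpace Ω] {P : Measure Ω} [IsProbabilityMeasure P]
    {Z : Ω → ℝ} (hZ : AEMeasurable Z P) : ∀ᵐ ω ∂P, 0 < cdf (P.map Z) (Z ω) := by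
  have := Measure.isProbabilityMeasure_map hZ
  have hpos : ∀ᵐ z ∂P.map Z, 0 < cdf (P.map Z) z := (ae_measure_Iic_ne_zero _).mono fun z hz =>
    ENNReal.ofReal_pos.1 (pos_iff_ne_zero.2 (ofReal_cdf (P.map Z) z ▸ hz))
  exact ae_of_ae_map hZ hpos

section SpectralRisk

variable {ν : Measure ℝ} [IsFiniteMeasure ν]

lemma lintegral_ofReal_ruGap_quantile_ne_top (ρ : Measure ℝ) (hν : ∀ᵐ α ∂ν, α ∈ Ioc 0 1)
    {z z₀ : ℝ} (h₀ : ∫⁻ α, ENNReal.ofReal (ruGap α (quantile ρ α) z₀) ∂ν ≠ ⊤)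
    (hz : 0 < cdf ρ z) : ∫⁻ α, ENNReal.ofReal (ruGap α (quantile ρ α) z) ∂ν ≠ ⊤ := by
  set C := ENNReal.ofReal ((cdf ρ z)⁻¹ * |z - z₀|)
  refine ne_top_of_le_ne_top (b := ∫⁻ α, (ENNReal.ofReal (ruGap α (quantile ρ α) z₀) + C) ∂ν) ?_
    (lintegral_mono_ae (hν.mono fun α hα => ?_))
  · rw [lintegral_add_right _ measurable_const, lintegral_const]
    exact ENNReal.add_ne_top.2 ⟨h₀, ENNReal.mul_ne_top ENNReal.ofReal_ne_top (measure_ne_top ν _)⟩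
  · refine (ENNReal.ofReal_le_ofReal ?_).trans ENNReal.ofReal_add_le
    exact ruGap_le_add_inv_mul_abs hα ⟨hz, cdf_le_one ρ z⟩ fun hαz => quantile_le ρ hα.1 hαz

variable {Ω : Type*} [MeasurableSpace Ω] {P : Measure Ω} [IsProbabilityMeasure P] {Z : Ω → ℝ}

lemma integrable_min_sub_const (hZ : Integrable Z P) (c : ℝ) :
    Integrable (fun ω => min (Z ω - c) 0) P :=
  (hZ.sub (integrable_const c)).inf (integrable_const 0)

lemma integrable_ruGap (hZ : Integrable Z P) (α c : ℝ) : Integrable (fun ω => ruGap α c (Z ω)) P :=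
  hZ.sub ((integrable_const c).add ((integrable_min_sub_const hZ c).const_mul α⁻¹))

lemma integral_integral_sub_ruGap_eq_zero (hZ : Integrable Z P) (hν : ∀ᵐ α ∂ν, α ∈ Ioc 0 1)
    (htop : ∫⁻ ω, ∫⁻ α, ENNReal.ofReal (ruGap α (quantile (P.map Z) α) (Z ω)) ∂ν ∂P = ⊤) :
    ∫ ω, ∫ α, (Z ω - ruGap α (quantile (P.map Z) α) (Z ω)) ∂ν ∂P = 0 := by
  set q := quantile (P.map Z)
  set φ := fun z => ∫⁻ α, ENNReal.ofReal (ruGap α (q α) z) ∂ν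
  have hgap : ∀ z, 0 ≤ᵐ[ν] fun α => ruGap α (q α) z := fun z => hν.mono fun _ => ruGap_nonneg
  by_cases hall : ∀ z, φ z = ⊤
  · simp_rw [fun ω => integral_sub_eq_zero_of_lintegral_ofReal_eq_top (integrable_const (Z ω))
      (hgap (Z ω)) (hall (Z ω)), integral_zero]
  obtain ⟨z₀, hz₀⟩ := not_forall.1 hall
  have hq : AEMeasurable q ν := aemeasurable_quantile _ hν
  have hfin : ∀ᵐ ω ∂P, φ (Z ω) ≠ ⊤ := (ae_cdf_map_pos hZ.aemeasurable).mono fun ω hω =>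
    lintegral_ofReal_ruGap_quantile_ne_top _ hν hz₀ hω
  have hinner : ∀ᵐ ω ∂P, ∫ α, (Z ω - ruGap α (q α) (Z ω)) ∂ν
      = ν.real univ * Z ω - (φ (Z ω)).toReal := hfin.mono fun ω hω => by
    have hm : AEMeasurable (fun α => ruGap α (q α) (Z ω)) ν := by unfold ruGap; fun_prop
    rw [integral_sub (integrable_const _) ⟨hm.aestronglyMeasurable,
        (hasFiniteIntegral_iff_ofReal (hgap _)).2 hω.lt_top⟩, integral_const, smul_eq_mul,
      integral_eq_lintegral_of_nonneg_ae (hgap _) hm.aestronglyMeasurable]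
  rw [integral_congr_ae hinner]
  refine integral_sub_eq_zero_of_lintegral_ofReal_eq_top (hZ.const_mul _)
    (ae_of_all _ fun _ => ENNReal.toReal_nonneg) ?_
  rwa [lintegral_congr_ae (hfin.mono fun _ => ENNReal.ofReal_toReal)]

theorem integral_integral_sub_ruGap_swap (hZ : Integrable Z P) (hν : ∀ᵐ α ∂ν, α ∈ Ioc 0 1) :
    ∫ ω, ∫ α, (Z ω - ruGap α (quantile (P.map Z) α) (Z ω)) ∂ν ∂P
      = ∫ α, ∫ ω, (Z ω - ruGap α (quantile (P.map Z) α) (Z ω)) ∂P ∂ν := by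
  set q := quantile (P.map Z)
  set G : ℝ × Ω → ℝ := fun p => ruGap p.1 (q p.1) (Z p.2)
  have hGm : AEMeasurable G (ν.prod P) := by
    have hm : Measurable fun x : ℝ × ℝ × ℝ => ruGap x.1 x.2.1 x.2.2 := by unfold ruGap; fun_prop
    exact hm.comp_aemeasurable (measurable_fst.aemeasurable.prodMk
      (((aemeasurable_quantile _ hν).comp_fst).prodMk hZ.aemeasurable.comp_snd))
  have hG0 : 0 ≤ᵐ[ν.prod P] G :=
    (Measure.quasiMeasurePreserving_fst.ae hν).mono fun _ hα => ruGap_nonneg hα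
  by_cases htop : ∫⁻ p, ENNReal.ofReal (G p) ∂(ν.prod P) = ⊤
  · rw [integral_integral_sub_ruGap_eq_zero hZ hν
      (by rwa [lintegral_prod_symm _ hGm.ennreal_ofReal] at htop)]
    simp_rw [integral_sub hZ (integrable_ruGap hZ _ _)]
    refine (integral_sub_eq_zero_of_lintegral_ofReal_eq_top (integrable_const _)
      (hν.mono fun α hα => integral_nonneg fun ω => ruGap_nonneg hα) ?_).symm
    rw [lintegral_prod _ hGm.ennreal_ofReal] at htop
    rw [← htop]
    refine lintegral_congr_ae (hν.mono fun α hα => ?_)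
    exact ofReal_integral_eq_lintegral_ofReal (integrable_ruGap hZ _ _)
      (ae_of_all _ fun ω => ruGap_nonneg hα)
  · have hG : Integrable G (ν.prod P) :=
      ⟨hGm.aestronglyMeasurable, (hasFiniteIntegral_iff_ofReal hG0).2 (lt_top_iff_ne_top.2 htop)⟩
    exact (integral_integral_swap ((hZ.comp_snd ν).sub hG)).symm

end SpectralRisk

theorem stmt2_general {Ω : Type*} [MeasurableSpace Ω] (P : Measure Ω) [IsProbabilityMeasure P]
    (Z : Ω → ℝ) (hZ : Integrable Z P)
    (μ : Measure ℝ) [IsProbabilityMeasure μ]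
    (q : ℝ → ℝ) (hq : ∀ u, q u = sInf {z | u ≤ (P {ω | Z ω ≤ z}).toReal})
    (cvar : ℝ → ℝ)
    (hcvar : ∀ α, cvar α = q α + α⁻¹ * ∫ ω, min (Z ω - q α) 0 ∂P)
    (h : ℝ → ℝ)
    (hh : ∀ z, h z = ∫ α in Set.Ioc (0:ℝ) 1, (q α + α⁻¹ * min (z - q α) 0) ∂μ) :
    ∫ ω, h (Z ω) ∂P = ∫ α in Set.Ioc (0:ℝ) 1, cvar α ∂μ := by
  have := Measure.isProbabilityMeasure_map (μ := P) hZ.aemeasurable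
  obtain rfl : q = quantile (P.map Z) := funext fun u => by
    rw [hq u, quantile]
    simp only [cdf_eq_real, measureReal_def,
      Measure.map_apply_of_aemeasurable hZ.aemeasurable measurableSet_Iic]
    rfl
  have h_eq : ∀ z, h z = ∫ α in Ioc 0 1, (z - ruGap α (quantile (P.map Z) α) z) ∂μ := fun z => by
    simp only [hh, ruGap, sub_sub_cancel]
  have cvar_eq : ∀ α, cvar α = ∫ ω, (Z ω - ruGap α (quantile (P.map Z) α) (Z ω)) ∂P := fun α => by
    simp only [hcvar, ruGap, sub_sub_cancel]
    rw [integral_add (integrable_const _) ((integrable_min_sub_const hZ _).const_mul _),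
      integral_const_mul, integral_const, probReal_univ, one_smul]
  simp only [h_eq, cvar_eq]
  exact integral_integral_sub_ruGap_swap hZ (ae_restrict_mem measurableSet_Ioc)

/-- For h(z) = ∫₀¹ [F_Z⁻¹(α) + (1/α) min(z − F_Z⁻¹(α), 0)] μ(dα),
E[h(Z)] = ∫₀¹ CVaR_α(Z) μ(dα), where CVaR is in Rockafellar–Uryasev form. -/
theorem stmt2 {Ω : Type*} [MeasurableSpace Ω] (P : Measure Ω) [IsProbabilityMeasure P]
    (Z : Ω → ℝ) (hZm : Measurable Z) (hZ : Integrable Z P)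
    (μ : Measure ℝ) [IsProbabilityMeasure μ] (hsupp : μ (Set.Ioc (0:ℝ) 1)ᶜ = 0)
    (q : ℝ → ℝ) (hq : ∀ u, q u = sInf {z | u ≤ (P {ω | Z ω ≤ z}).toReal})
    (cvar : ℝ → ℝ)
    (hcvar : ∀ α, cvar α = q α + α⁻¹ * ∫ ω, min (Z ω - q α) 0 ∂P)
    (h : ℝ → ℝ)
    (hh : ∀ z, h z = ∫ α in Set.Ioc (0:ℝ) 1, (q α + α⁻¹ * min (z - q α) 0) ∂μ) :
    ∫ ω, h (Z ω) ∂P = ∫ α in Set.Ioc (0:ℝ) 1, cvar α ∂μ :=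
  stmt2_general P Z hZ μ q hq cvar hcvar h hh
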